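/- arXiv:1203.2090 — 2 statements merged into one kernel-verified Lean document; each statement's English description precedes it below -/
import Mathlib

section
/- Let A be the set {(0,0)} ∪ {(⌊φn⌋+1, ⌊φ²n⌋+1) : n ≥ 0} ⊆ ℕ × ℕ (with pairs considered unordered). Then from every position (a,b) ∉ A with a ≤ b, there exists a legal F-Wythoff move to a position in A. -/
noncomputable def phi : ℝ := (1 + Real.sqrt 5) / 2

noncomputable def fl (n : ℕ) : ℕ := ⌊phi * n⌋₊

noncomputable def fl2 (n : ℕ) : ℕ := ⌊phi ^ 2 * n⌋₊

def FMove (p q : ℕ × ℕ) : Prop :=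
  ∃ a b x y : ℕ, a ≤ b ∧ x ≤ y ∧ (p = (a, b) ∨ p = (b, a)) ∧ (q = (x, y) ∨ q = (y, x)) ∧
    ((x = a ∧ y < b) ∨ (x < a ∧ y = b) ∨ (x < a ∧ y = a) ∨
      (∃ k, 1 ≤ k ∧ k < a ∧ (b - k) / (a - k) = b / a ∧ x = a - k ∧ y = b - k))

theorem fMove_lt {p q : ℕ × ℕ} (h : FMove p q) : q.1 + q.2 < p.1 + p.2 := by
  obtain ⟨a, b, x, y, hab, hxy, hp, hq, hc⟩ := h
  have hps : p.1 + p.2 = a + b := by rcases hp with h | h <;> subst h <;> simp <;> omega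
  have hqs : q.1 + q.2 = x + y := by rcases hq with h | h <;> subst h <;> simp <;> omega
  rw [hps, hqs]
  rcases hc with ⟨h1, h2⟩ | ⟨h1, h2⟩ | ⟨h1, h2⟩ | ⟨k, hk1, hk2, _, h1, h2⟩ <;> omega

def PPos (p : ℕ × ℕ) : Prop := ∀ q, FMove p q → ¬ PPos q
termination_by p.1 + p.2
decreasing_by exact fMove_lt (by assumption)

noncomputable def grundy (p : ℕ × ℕ) : ℕ :=
  sInf {g : ℕ | ∀ q, FMove p q → grundy q ≠ g}
termination_by p.1 + p.2
decreasing_by exact fMove_lt (by assumption)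

/-!
Write `(a, b) = (a, a + d)`. The pair of the target set with difference `d` is
`(⌊φd⌋ + 1, ⌊φ²d⌋ + 1)`, since `⌊φ²d⌋ = ⌊φd⌋ + d`. If `a > ⌊φd⌋ + 1`, subtracting the same amount
from both coordinates reaches it, and both quotients equal `1` because the difference `d` is smaller
than the smaller coordinate. If `0 < a ≤ ⌊φd⌋`, Rayleigh's theorem for the complementary Beatty
sequences `⌊φn⌋` and `⌊φ²n⌋` places `a - 1` in one of them, and lowering `b` reaches the pair
containing `a`.
-/

open Real

open scoped goldenRatio

lemma phi_eq_goldenRatio : phi = φ := rfl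

lemma fl2_eq_fl_add (n : ℕ) : fl2 n = fl n + n := by
  have h : φ ^ 2 * n = φ * n + n := by rw [goldenRatio_sq]; ring
  rw [fl2, fl, phi_eq_goldenRatio, h,
    Nat.floor_add_natCast (mul_nonneg goldenRatio_pos.le n.cast_nonneg)]

lemma le_fl (n : ℕ) : n ≤ fl n :=
  Nat.le_floor (le_mul_of_one_le_left n.cast_nonneg one_lt_goldenRatio.le)

lemma fl_strictMono : StrictMono fl := by
  intro n m hnm
  have hfl : (fl n : ℝ) ≤ φ * n := Nat.floor_le (mul_nonneg goldenRatio_pos.le n.cast_nonneg)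
  have hnm' : (n : ℝ) + 1 ≤ m := by exact_mod_cast hnm
  refine Nat.lt_of_succ_le (Nat.le_floor ?_)
  push_cast
  rw [phi_eq_goldenRatio]
  nlinarith [one_lt_goldenRatio]

lemma holderConjugate_goldenRatio_sq : HolderConjugate φ (φ ^ 2) := by
  rw [holderConjugate_iff_eq_conjExponent one_lt_goldenRatio,
    eq_div_iff (sub_ne_zero.2 one_lt_goldenRatio.ne')]
  linear_combination φ * goldenRatio_sq

lemma beattySeq_natCast {r : ℝ} (hr : 0 ≤ r) (n : ℕ) : beattySeq r n = ⌊r * n⌋₊ := by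
  rw [beattySeq, Int.natCast_floor_eq_floor (by positivity), mul_comm, Int.cast_natCast]

lemma exists_eq_fl_or_eq_fl2 (m : ℕ) : ∃ n, m = fl n ∨ (0 < n ∧ m = fl2 n) := by
  rcases Nat.eq_zero_or_pos m with rfl | hm
  · exact ⟨0, Or.inl (by simp [fl])⟩
  have hmem : (m : ℤ) ∈ {n : ℤ | 0 < n} := by simpa using hm
  rw [← Irrational.beattySeq_symmDiff_beattySeq_pos holderConjugate_goldenRatio_sq
    goldenRatio_irrational] at hmem
  obtain ⟨⟨k, hk, hkm⟩, -⟩ | ⟨⟨k, hk, hkm⟩, -⟩ := hmem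
  · lift k to ℕ using hk.le
    rw [beattySeq_natCast goldenRatio_pos.le] at hkm
    exact ⟨k, Or.inl (by exact_mod_cast hkm.symm)⟩
  · lift k to ℕ using hk.le
    rw [beattySeq_natCast (by positivity)] at hkm
    exact ⟨k, Or.inr ⟨by exact_mod_cast hk, by exact_mod_cast hkm.symm⟩⟩

namespace FMove

lemma of_lt_right {a b y : ℕ} (hay : a ≤ y) (hyb : y < b) : FMove (a, b) (a, y) :=
  ⟨a, b, a, y, hay.trans hyb.le, hay, Or.inl rfl, Or.inl rfl, Or.inl ⟨rfl, hyb⟩⟩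

lemma of_lt_left {a b x : ℕ} (hab : a ≤ b) (hxa : x < a) : FMove (a, b) (x, a) :=
  ⟨a, b, x, a, hab, hxa.le, Or.inl rfl, Or.inl rfl, Or.inr (Or.inr (Or.inl ⟨hxa, rfl⟩))⟩

lemma sub_sub {a b k : ℕ} (hab : a ≤ b) (hk : 0 < k) (hka : k < a)
    (hdiv : (b - k) / (a - k) = b / a) : FMove (a, b) (a - k, b - k) :=
  ⟨a, b, a - k, b - k, hab, by omega, Or.inl rfl, Or.inl rfl,
    Or.inr (Or.inr (Or.inr ⟨k, hk, hka, hdiv, rfl, rfl⟩))⟩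

end FMove

noncomputable def wythoffPair (n : ℕ) : ℕ × ℕ := (fl n + 1, fl2 n + 1)

lemma exists_fMove_wythoffPair_of_le_fl {a d : ℕ} (ha : 0 < a) (had : a ≤ fl d) :
    ∃ n, FMove (a, a + d) (wythoffPair n) := by
  obtain ⟨n, hn | ⟨hn, hn'⟩⟩ := exists_eq_fl_or_eq_fl2 (a - 1)
  · obtain rfl : a = fl n + 1 := by omega
    have hnd : n < d := fl_strictMono.lt_iff_lt.1 (by omega)
    have := fl2_eq_fl_add n
    exact ⟨n, FMove.of_lt_right (by omega) (by omega)⟩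
  · obtain rfl : a = fl2 n + 1 := by omega
    have := fl2_eq_fl_add n
    exact ⟨n, FMove.of_lt_left (by omega) (by omega)⟩

lemma fMove_wythoffPair_of_fl_lt {a d : ℕ} (h : fl d + 1 < a) :
    FMove (a, a + d) (wythoffPair d) := by
  have hd := le_fl d
  have hfl2 := fl2_eq_fl_add d
  have hx : a - (a - (fl d + 1)) = fl d + 1 := by omega
  have hy : a + d - (a - (fl d + 1)) = fl2 d + 1 := by omega
  have hmove := FMove.sub_sub (a := a) (b := a + d) (k := a - (fl d + 1)) (by omega) (by omega) (by omega)
    (by rw [hx, hy, Nat.div_eq_of_lt_le (k := 1) (n := fl d + 1) (by omega) (by omega),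
      Nat.div_eq_of_lt_le (k := 1) (n := a) (by omega) (by omega)])
  rwa [hx, hy] at hmove

theorem stmt10 (a b : ℕ) (hab : a ≤ b)
    (h : (a, b) ∉ {p : ℕ × ℕ | p = (0, 0) ∨ ∃ n : ℕ, p = (fl n + 1, fl2 n + 1) ∨ p = (fl2 n + 1, fl n + 1)}) :
    ∃ q ∈ {p : ℕ × ℕ | p = (0, 0) ∨ ∃ n : ℕ, p = (fl n + 1, fl2 n + 1) ∨ p = (fl2 n + 1, fl n + 1)}, FMove (a, b) q := by
  obtain ⟨d, rfl⟩ := Nat.exists_eq_add_of_le hab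
  rcases Nat.eq_zero_or_pos a with rfl | ha
  · refine ⟨(0, 0), Or.inl rfl, FMove.of_lt_right le_rfl (Nat.pos_of_ne_zero ?_)⟩
    rintro hd
    exact h (Or.inl (by rw [hd]))
  rcases lt_trichotomy a (fl d + 1) with hlt | rfl | hgt
  · obtain ⟨n, hn⟩ := exists_fMove_wythoffPair_of_le_fl (d := d) ha (by omega)
    exact ⟨_, Or.inr ⟨n, Or.inl rfl⟩, hn⟩
  · exact absurd (Or.inr ⟨d, Or.inl (by rw [fl2_eq_fl_add, add_right_comm])⟩) h
  · exact ⟨_, Or.inr ⟨d, Or.inl rfl⟩, fMove_wythoffPair_of_fl_lt hgt⟩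
end

section
/- For each nonnegative integer k, let {(aₙ, bₙ)}ₙ≥0 enumerate (with aₙ ≤ bₙ and a₀ < a₁ < a₂ < ⋯) all positions of F-Wythoff with Sprague-Grundy value k. Then {aₙ : n ≥ 0} ∪ {bₙ : n ≥ 0} = ℤ≥0, and the intersection {aₙ : n ≥ 0} ∩ {bₙ : n ≥ 0} has at most 2 elements. -/
set_option linter.unnecessarySeqFocus false

/-!
Positions of equal Grundy value are never options of one another. Of two distinct positions
sharing a coordinate, one is an option of the other (a one-coordinate move, or the move taking
the larger coordinate below the smaller one), so each line `{m} × ℕ ∪ ℕ × {m}` carries at most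
one position of value `k`; on the diagonal, where a diagonal move (the quotient stays `1`) joins
any two positions `(s, s)`, `(t, t)` with `s, t ≥ 1`, there are at most two such positions. This
gives the intersection bound. For the union, if no position of value `k` met the line of `m`,
then far out in row `m` no option would have value `k` either (the `k`-positions with smaller
coordinate below `m` are finitely many), so infinitely many distinct values `grundy (m, v)` would
all be `≤ k`.
-/

theorem grundy_eq (p : ℕ × ℕ) : grundy p = sInf {g : ℕ | ∀ q, FMove p q → grundy q ≠ g} := by
  rw [grundy]

theorem grundy_le_of_forall_ne {p : ℕ × ℕ} {g : ℕ} (h : ∀ q, FMove p q → grundy q ≠ g) :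
    grundy p ≤ g :=
  grundy_eq p ▸ Nat.sInf_le h

theorem grundy_le_sum (p : ℕ × ℕ) : grundy p ≤ p.1 + p.2 :=
  grundy_le_of_forall_ne fun q hq => by
    have := fMove_lt hq
    have := grundy_le_sum q
    omega
termination_by p.1 + p.2
decreasing_by exact fMove_lt (by assumption)

theorem grundy_ne_of_fMove {p q : ℕ × ℕ} (h : FMove p q) : grundy q ≠ grundy p := by
  have hmem : grundy p ∈ {g : ℕ | ∀ q, FMove p q → grundy q ≠ g} := by
    rw [grundy_eq]
    refine Nat.sInf_mem ⟨p.1 + p.2, fun q hq => ?_⟩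
    have := fMove_lt hq
    have := grundy_le_sum q
    omega
  exact hmem q h

theorem fMove_swap_iff (x y : ℕ) (q : ℕ × ℕ) : FMove (x, y) q ↔ FMove (y, x) q := by
  constructor <;>
  · rintro ⟨a, b, u, v, hab, huv, hp, hq, hc⟩
    refine ⟨a, b, u, v, hab, huv, ?_, hq, hc⟩
    rcases hp with h | h <;> [right; left] <;> (simp only [Prod.mk.injEq] at h ⊢; omega)

theorem grundy_swap (x y : ℕ) : grundy (x, y) = grundy (y, x) := by
  rw [grundy_eq, grundy_eq]
  congr 1
  ext g
  exact forall_congr' fun q => by rw [fMove_swap_iff]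

theorem fMove_of_snd_lt {m v v' : ℕ} (hm : m ≤ v') (hv : v' < v) : FMove (m, v) (m, v') :=
  ⟨m, v, m, v', hm.trans hv.le, hm, .inl rfl, .inl rfl, .inl ⟨rfl, hv⟩⟩

theorem fMove_of_fst_lt {u u' v : ℕ} (hu : u' < u) (huv : u ≤ v) : FMove (u, v) (u', v) :=
  ⟨u, v, u', v, huv, hu.le.trans huv, .inl rfl, .inl rfl, .inr (.inl ⟨hu, rfl⟩)⟩

theorem fMove_below_fst {u u' v : ℕ} (hu : u' < u) (huv : u ≤ v) : FMove (u, v) (u', u) :=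
  ⟨u, v, u', u, huv, hu.le, .inl rfl, .inl rfl, .inr (.inr (.inl ⟨hu, rfl⟩))⟩

theorem fMove_diag {s t : ℕ} (ht : 1 ≤ t) (hts : t < s) : FMove (s, s) (t, t) := by
  refine ⟨s, s, t, t, le_rfl, le_rfl, .inl rfl, .inl rfl,
    .inr (.inr (.inr ⟨s - t, by omega, by omega, ?_, by omega, by omega⟩))⟩
  rw [Nat.sub_sub_self hts.le, Nat.div_self (by omega), Nat.div_self (by omega)]

theorem FMove.exists_of_le {m v : ℕ} {q : ℕ × ℕ} (hmv : m ≤ v) (h : FMove (m, v) q) :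
    ∃ u w, u ≤ w ∧ grundy q = grundy (u, w) ∧ (u = m ∨ w = m ∨ (u < m ∧ v < w + m)) := by
  obtain ⟨a, b, u, w, hab, huw, hp, hq, hc⟩ := h
  have hab : a = m ∧ b = v := by
    rcases hp with e | e <;> (simp only [Prod.mk.injEq] at e; omega)
  refine ⟨u, w, huw, ?_, ?_⟩
  · rcases hq with rfl | rfl
    exacts [rfl, grundy_swap w u]
  · rcases hc with ⟨h1, h2⟩ | ⟨h1, h2⟩ | ⟨h1, h2⟩ | ⟨j, hj1, hj2, _, h1, h2⟩ <;> omega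

theorem fMove_of_shared_coord {x y x' y' : ℕ} (hxy : x ≤ y) (hxy' : x' ≤ y')
    (hne : (x, y) ≠ (x', y')) (hsum : x' + y' ≤ x + y)
    (hshare : x = x' ∨ x = y' ∨ y = x' ∨ y = y') : FMove (x, y) (x', y') := by
  simp only [ne_eq, Prod.mk.injEq] at hne
  rcases hshare with rfl | rfl | rfl | rfl
  · exact fMove_of_snd_lt hxy' (by omega)
  · rcases hxy'.lt_or_eq with hlt | rfl
    · exact fMove_below_fst hlt hxy
    · exact fMove_of_snd_lt le_rfl (by omega)
  · omega
  · exact fMove_of_fst_lt (by omega) hxy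

theorem eq_of_grundy_eq_of_shared_coord {x y x' y' : ℕ} (hxy : x ≤ y) (hxy' : x' ≤ y')
    (hg : grundy (x, y) = grundy (x', y')) (hshare : x = x' ∨ x = y' ∨ y = x' ∨ y = y') :
    (x, y) = (x', y') := by
  by_contra hne
  rcases le_total (x' + y') (x + y) with hsum | hsum
  · exact grundy_ne_of_fMove (fMove_of_shared_coord hxy hxy' hne hsum hshare) hg.symm
  · exact grundy_ne_of_fMove (fMove_of_shared_coord hxy' hxy (Ne.symm hne) hsum (by omega)) hg

theorem grundy_row_injOn (m : ℕ) : Set.InjOn (fun v => grundy (m, v)) (Set.Ici m) :=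
  fun _ hv _ hv' hg => (Prod.mk.inj (eq_of_grundy_eq_of_shared_coord hv hv' hg (.inl rfl))).2

theorem finite_grundy_eq_of_fst_lt (k m : ℕ) :
    {p : ℕ × ℕ | p.1 ≤ p.2 ∧ grundy p = k ∧ p.1 < m}.Finite := by
  refine Set.Finite.of_finite_image (f := Prod.fst) ((Set.finite_Iio m).subset ?_) ?_
  · rintro _ ⟨p, hp, rfl⟩
    exact hp.2.2
  · rintro ⟨u, v⟩ ⟨huv, hg, -⟩ ⟨u', v'⟩ ⟨huv', hg', -⟩ hu
    exact eq_of_grundy_eq_of_shared_coord huv huv' (hg.trans hg'.symm) (.inl hu)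

theorem exists_grundy_eq_on_line (k m : ℕ) :
    ∃ u v, u ≤ v ∧ grundy (u, v) = k ∧ (u = m ∨ v = m) := by
  by_contra! hcon
  obtain ⟨M, hM⟩ := ((finite_grundy_eq_of_fst_lt k m).image Prod.snd).bddAbove
  have hsmall : Set.MapsTo (fun v => grundy (m, v)) (Set.Ioi (M + m)) (Set.Iic k) := by
    intro v hv
    refine grundy_le_of_forall_ne fun q hq hk => ?_
    obtain ⟨u, w, huw, hg, hc⟩ := FMove.exists_of_le (by simp at hv; omega) hq
    rw [hg] at hk
    have := hcon u w huw hk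
    rcases hc with rfl | rfl | ⟨hu, hw⟩
    · exact this.1 rfl
    · exact this.2 rfl
    · have : w ≤ M := hM ⟨(u, w), ⟨huw, hk, hu⟩, rfl⟩
      simp at hv
      omega
  exact Set.infinite_of_injOn_mapsTo ((grundy_row_injOn m).mono fun v hv => by simp at hv ⊢; omega)
    hsmall (Set.Ioi_infinite _) (Set.finite_Iic k)

theorem encard_grundy_diag_le_two (k : ℕ) : {m | grundy (m, m) = k}.encard ≤ 2 := by
  have hpos : {m | 0 < m ∧ grundy (m, m) = k}.Subsingleton := by
    rintro s ⟨hs, hgs⟩ t ⟨ht, hgt⟩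
    by_contra hst
    rcases Nat.lt_or_gt_of_ne hst with h | h
    · exact grundy_ne_of_fMove (fMove_diag hs h) (hgs.trans hgt.symm)
    · exact grundy_ne_of_fMove (fMove_diag ht h) (hgt.trans hgs.symm)
  calc {m | grundy (m, m) = k}.encard
      ≤ (insert 0 {m | 0 < m ∧ grundy (m, m) = k}).encard :=
        Set.encard_mono fun m hm => by
          rcases m.eq_zero_or_pos with rfl | h
          exacts [.inl rfl, .inr ⟨h, hm⟩]
    _ ≤ 1 + 1 := (Set.encard_insert_le _ _).trans
        (add_le_add_left (Set.encard_le_one_iff_subsingleton.2 hpos) 1)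
    _ = 2 := one_add_one_eq_two

theorem stmt18_general (k : ℕ) (a b : ℕ → ℕ)
    (hord : ∀ n, a n ≤ b n)
    (hval : ∀ n, grundy (a n, b n) = k)
    (hall : ∀ x y : ℕ, x ≤ y → grundy (x, y) = k → ∃ n, (x, y) = (a n, b n)) :
    (Set.range a ∪ Set.range b = Set.univ) ∧
    (Set.range a ∩ Set.range b).encard ≤ 2 := by
  constructor
  · refine Set.eq_univ_of_forall fun m => ?_
    obtain ⟨u, v, huv, hg, hm⟩ := exists_grundy_eq_on_line k m
    obtain ⟨n, hn⟩ := hall u v huv hg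
    simp only [Prod.mk.injEq] at hn
    rcases hm with rfl | rfl
    exacts [.inl ⟨n, hn.1.symm⟩, .inr ⟨n, hn.2.symm⟩]
  · have hdiag : Set.range a ∩ Set.range b ⊆ {m | grundy (m, m) = k} := by
      rintro m ⟨⟨i, rfl⟩, ⟨j, hj⟩⟩
      have hij := eq_of_grundy_eq_of_shared_coord (hord j) (hord i)
        ((hval j).trans (hval i).symm) (.inr (.inr (.inl hj)))
      simp only [Prod.mk.injEq] at hij
      simpa [hij.1, ← hj] using hval j
    exact (Set.encard_mono hdiag).trans (encard_grundy_diag_le_two k)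

theorem stmt18 (k : ℕ) (a b : ℕ → ℕ)
    (hord : ∀ n, a n ≤ b n)
    (hmono : StrictMono a)
    (hval : ∀ n, grundy (a n, b n) = k)
    (hall : ∀ x y : ℕ, x ≤ y → grundy (x, y) = k → ∃ n, (x, y) = (a n, b n)) :
    (Set.range a ∪ Set.range b = Set.univ) ∧
    (Set.range a ∩ Set.range b).encard ≤ 2 :=
  stmt18_general k a b hord hval hall
end
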